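/- arXiv:0905.2259 — 2 statements merged into one kernel-verified Lean document; each statement's English description precedes it below -/
import Mathlib

section
/- With $\nu$ as in the invariant-measure theorem, the second marginal satisfies $\nu_2(y):=\sum_x \nu(x,y)=\mathbb{E}_\pi(p(C_0,y)H_y)$, where $H_y=\inf\{n>0:C_n=y\}$ and $\mathbb{E}_\pi$ denotes expectation with $C_0$ distributed according to $\pi$. -/
open MeasureTheory Filter Set Classical
open scoped ENNReal BigOperators Topology
noncomputable section
attribute [local instance] Classical.propDecidable

/-- Cylinder law of a Markov chain with transition matrix `p` started at `x`. -/
def IsMarkovChainLaw {S : Type*} [MeasurableSpace S]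
    (p : S → S → ℝ≥0∞) (μ : S → Measure (ℕ → S)) : Prop :=
  ∀ x : S, ∀ n : ℕ, ∀ c : ℕ → S,
    μ x {ω | ∀ i ≤ n, ω i = c i}
      = if c 0 = x then ∏ i ∈ Finset.range n, p (c i) (c (i + 1)) else 0

/-- `∑_{n=1}^{H_y} p(ω_n, y)`, where `H_y = inf{n > 0 : ω_n = y}`. -/
def sumToHit {S : Type*} (p : S → S → ℝ≥0∞) (y : S) (ω : ℕ → S) : ℝ≥0∞ :=
  ∑' n : ℕ, if 1 ≤ n ∧ (∀ k, 1 ≤ k → k < n → ω k ≠ y) then p (ω n) y else 0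

/-- The first return time `H_y = inf{n > 0 : ω_n = y}` (with value `∞` if never),
counted as `∑_{n ≥ 1} 1_{n ≤ H_y}`. -/
def hitTime {S : Type*} (y : S) (ω : ℕ → S) : ℝ≥0∞ :=
  ∑' n : ℕ, if 1 ≤ n ∧ (∀ k, 1 ≤ k → k < n → ω k ≠ y) then 1 else 0

/-! Both sides are sums over `n ≥ 1` of sums over paths `c = (c₀, …, cₙ)`. Telescoping
`p*(x, y) π(x) = π(y) p(y, x)` along a path shows that the stationary weight
`π(c₀) ∏ p*(cᵢ, cᵢ₊₁)` of `c` under the reversed chain is the stationary weight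
`π(cₙ) ∏ p(cₙ₋ᵢ, cₙ₋ᵢ₋₁)` of the reversed path under the chain itself. Reversal maps the
event "`c` avoids `y` at times `1, …, n-1`" to itself and the final factor `p(cₙ, y)` to
`p(c₀, y)`, so the `n`-th summand of `ν₂(y)` is `E_π(p(C₀, y) 1{H_y ≥ n})`; summing over `n`
gives `E_π(p(C₀, y) H_y)`. -/

namespace MarkovPath

variable {S : Type*}

def initSeg (n : ℕ) (ω : ℕ → S) : Fin (n + 1) → S := fun i => ω i

def pathWeight (p : S → S → ℝ≥0∞) {n : ℕ} (c : Fin (n + 1) → S) : ℝ≥0∞ :=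
  ∏ i : Fin n, p (c i.castSucc) (c i.succ)

def AvoidsInterior (y : S) {n : ℕ} (c : Fin (n + 1) → S) : Prop :=
  ∀ k : Fin (n + 1), k ≠ 0 → k ≠ Fin.last n → c k ≠ y

/-- For `c = initSeg n ω`, `returnTerm y (p · y) c` and `returnTerm y 1 c` are the `n`-th summands
of `sumToHit p y ω` and of `hitTime y ω`. -/
def returnTerm (y : S) (f : S → ℝ≥0∞) {n : ℕ} (c : Fin (n + 1) → S) : ℝ≥0∞ :=
  if 1 ≤ n ∧ AvoidsInterior y c then f (c (Fin.last n)) else 0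

lemma avoidsInterior_initSeg_iff {y : S} {n : ℕ} {ω : ℕ → S} :
    AvoidsInterior y (initSeg n ω) ↔ ∀ k, 1 ≤ k → k < n → ω k ≠ y := by
  simp only [AvoidsInterior, initSeg, Fin.forall_iff, ne_eq, Fin.ext_iff, Fin.val_zero,
    Fin.val_last]
  exact ⟨fun h k hk hkn => h k (by omega) (by omega) (by omega),
    fun h k _ hk hkn => h k (by omega) (by omega)⟩

lemma returnTerm_initSeg (y : S) (f : S → ℝ≥0∞) (n : ℕ) (ω : ℕ → S) :
    returnTerm y f (initSeg n ω)
      = if 1 ≤ n ∧ (∀ k, 1 ≤ k → k < n → ω k ≠ y) then f (ω n) else 0 := by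
  simp only [returnTerm, avoidsInterior_initSeg_iff]
  split_ifs <;> rfl

lemma sumToHit_eq_tsum_returnTerm (p : S → S → ℝ≥0∞) (y : S) (ω : ℕ → S) :
    sumToHit p y ω = ∑' n, returnTerm y (p · y) (initSeg n ω) :=
  tsum_congr fun n => (returnTerm_initSeg y (p · y) n ω).symm

lemma hitTime_eq_tsum_returnTerm (y : S) (ω : ℕ → S) :
    hitTime y ω = ∑' n, returnTerm y 1 (initSeg n ω) :=
  tsum_congr fun n => (returnTerm_initSeg y 1 n ω).symm

lemma avoidsInterior_comp_rev {y : S} {n : ℕ} {c : Fin (n + 1) → S} :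
    AvoidsInterior y (c ∘ Fin.rev) ↔ AvoidsInterior y c := by
  refine ⟨fun h k hk0 hkl => ?_, fun h k hk0 hkl => h _ ?_ ?_⟩
  · simpa using h k.rev (by simpa [Fin.rev_eq_iff] using hkl) (by simpa [Fin.rev_eq_iff] using hk0)
  · simpa [Fin.rev_eq_iff] using hkl
  · simpa [Fin.rev_eq_iff] using hk0

lemma returnTerm_comp_rev (y : S) (f : S → ℝ≥0∞) {n : ℕ} (c : Fin (n + 1) → S) :
    returnTerm y f (c ∘ Fin.rev) = f (c 0) * returnTerm y 1 c := by
  simp only [returnTerm, avoidsInterior_comp_rev, Function.comp_apply, Fin.rev_last,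
    Pi.one_apply, mul_ite, mul_one, mul_zero]

lemma pi_mul_pathWeight_of_reversal {p pstar : S → S → ℝ≥0∞} {π : S → ℝ≥0∞}
    (hpstar : ∀ x y, pstar x y * π x = π y * p y x) {n : ℕ} (c : Fin (n + 1) → S) :
    π (c 0) * pathWeight pstar c = π (c (Fin.last n)) * pathWeight p (c ∘ Fin.rev) := by
  have htelescope : ∀ {n : ℕ} (c : Fin (n + 1) → S), π (c 0) * pathWeight pstar c
      = π (c (Fin.last n)) * ∏ i : Fin n, p (c i.succ) (c i.castSucc) := by
    intro n
    induction n with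
    | zero => simp [pathWeight]
    | succ n ih =>
      intro c
      have hinit := ih (Fin.init c)
      simp only [Fin.init, pathWeight, Fin.castSucc_zero, ← Fin.succ_castSucc] at hinit
      rw [pathWeight, Fin.prod_univ_castSucc, Fin.prod_univ_castSucc, ← mul_assoc, hinit,
        Fin.succ_last, mul_right_comm, mul_comm _ (pstar _ _), hpstar, mul_assoc, mul_comm (p _ _)]
  rw [htelescope, pathWeight]
  congr 1
  exact Fintype.prod_equiv Fin.revPerm _ _ fun i => by simp [Fin.rev_castSucc, Fin.rev_succ]

lemma tsum_pi_mul_pathWeight_of_reversal {p pstar : S → S → ℝ≥0∞} {π : S → ℝ≥0∞}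
    (hpstar : ∀ x y, pstar x y * π x = π y * p y x) {n : ℕ} (G : (Fin (n + 1) → S) → ℝ≥0∞) :
    ∑' c, π (c 0) * pathWeight pstar c * G c
      = ∑' c, π (c 0) * pathWeight p c * G (c ∘ Fin.rev) := by
  rw [← (Fin.revPerm.arrowCongr (Equiv.refl S)).tsum_eq]
  refine tsum_congr fun c => ?_
  change π ((c ∘ Fin.rev) 0) * pathWeight pstar (c ∘ Fin.rev) * G (c ∘ Fin.rev) = _
  rw [pi_mul_pathWeight_of_reversal hpstar]
  simp [Function.comp_def]

lemma measurable_initSeg [MeasurableSpace S] (n : ℕ) : Measurable (initSeg (S := S) n) :=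
  measurable_pi_lambda _ fun i => measurable_pi_apply (i : ℕ)

end MarkovPath

open MarkovPath

section MarkovChainLaw

variable {S : Type*} [MeasurableSpace S]

lemma IsMarkovChainLaw.measure_initSeg_preimage_singleton {p : S → S → ℝ≥0∞}
    {μ : S → Measure (ℕ → S)} (hμ : IsMarkovChainLaw p μ) (x : S) {n : ℕ}
    (c : Fin (n + 1) → S) :
    μ x (initSeg n ⁻¹' {c}) = if c 0 = x then pathWeight p c else 0 := by
  have hcyl : initSeg n ⁻¹' {c} = {ω | ∀ i ≤ n, ω i = c (Fin.clamp i n)} := by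
    ext ω
    simp only [Set.mem_preimage, Set.mem_singleton_iff, Set.mem_ofPred_eq, funext_iff, initSeg,
      Fin.forall_iff, Fin.clamp, Nat.lt_succ_iff]
    refine forall_congr' fun i => forall_congr' fun hi => ?_
    simp only [Nat.min_eq_left hi]
  rw [hcyl, hμ x n, pathWeight, ← Fin.prod_univ_eq_prod_range]
  congr 1
  refine Finset.prod_congr rfl fun i _ => ?_
  congr 2 <;> ext <;> simp [Fin.clamp]

variable [MeasurableSingletonClass S] [Countable S]

lemma IsMarkovChainLaw.lintegral_comp_initSeg {p : S → S → ℝ≥0∞}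
    {μ : S → Measure (ℕ → S)} (hμ : IsMarkovChainLaw p μ) (x : S) {n : ℕ}
    (G : (Fin (n + 1) → S) → ℝ≥0∞) :
    ∫⁻ ω, G (initSeg n ω) ∂μ x = ∑' c, G c * if c 0 = x then pathWeight p c else 0 := by
  rw [← lintegral_map (measurable_of_countable G) (measurable_initSeg n), lintegral_countable']
  refine tsum_congr fun c => ?_
  rw [Measure.map_apply (measurable_initSeg n) (measurableSet_singleton c),
    hμ.measure_initSeg_preimage_singleton]

lemma IsMarkovChainLaw.tsum_mul_lintegral_comp_initSeg {p : S → S → ℝ≥0∞}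
    {μ : S → Measure (ℕ → S)} (hμ : IsMarkovChainLaw p μ) (f : S → ℝ≥0∞) {n : ℕ}
    (G : (Fin (n + 1) → S) → ℝ≥0∞) :
    ∑' x, f x * ∫⁻ ω, G (initSeg n ω) ∂μ x = ∑' c, f (c 0) * pathWeight p c * G c := by
  simp_rw [hμ.lintegral_comp_initSeg, ← ENNReal.tsum_mul_left]
  rw [ENNReal.tsum_comm]
  refine tsum_congr fun c => ?_
  simp_rw [mul_ite, mul_zero]
  rw [tsum_ite_eq' (c 0)]
  ring

end MarkovChainLaw

lemma tsum_mul_lintegral_tsum {α Ω ι : Type*} [MeasurableSpace Ω] [Countable ι]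
    (μ : α → Measure Ω) (f : α → ℝ≥0∞) {g : ι → Ω → ℝ≥0∞} (hg : ∀ i, Measurable (g i)) :
    ∑' x, f x * ∫⁻ ω, ∑' i, g i ω ∂μ x = ∑' i, ∑' x, f x * ∫⁻ ω, g i ω ∂μ x := by
  simp_rw [lintegral_tsum fun i => (hg i).aemeasurable, ← ENNReal.tsum_mul_left]
  exact ENNReal.tsum_comm

section Reversal

variable {S : Type*} [MeasurableSpace S] [MeasurableSingletonClass S] [Countable S]
  {p pstar : S → S → ℝ≥0∞} {π : S → ℝ≥0∞} {μstar μ : S → Measure (ℕ → S)}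

lemma tsum_mul_lintegral_returnTerm_of_reversal (hpstar : ∀ x y, pstar x y * π x = π y * p y x)
    (hμstar : IsMarkovChainLaw pstar μstar) (hμ : IsMarkovChainLaw p μ)
    (y : S) (f : S → ℝ≥0∞) (n : ℕ) :
    ∑' x, π x * ∫⁻ ω, returnTerm y f (initSeg n ω) ∂μstar x
      = ∑' x, π x * f x * ∫⁻ ω, returnTerm y 1 (initSeg n ω) ∂μ x := by
  calc ∑' x, π x * ∫⁻ ω, returnTerm y f (initSeg n ω) ∂μstar x
      = ∑' c, π (c 0) * pathWeight pstar c * returnTerm y f c :=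
        hμstar.tsum_mul_lintegral_comp_initSeg π _
    _ = ∑' c, π (c 0) * pathWeight p c * returnTerm y f (c ∘ Fin.rev) :=
        tsum_pi_mul_pathWeight_of_reversal hpstar _
    _ = ∑' c, π (c 0) * f (c 0) * pathWeight p c * returnTerm y 1 c := by
        simp_rw [returnTerm_comp_rev]
        exact tsum_congr fun c => by ring
    _ = ∑' x, π x * f x * ∫⁻ ω, returnTerm y 1 (initSeg n ω) ∂μ x :=
        (hμ.tsum_mul_lintegral_comp_initSeg (fun x => π x * f x) _).symm

end Reversal

theorem nu_second_marginal_general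
    {S : Type*} [MeasurableSpace S] [MeasurableSingletonClass S] [Countable S]
    (p : S → S → ℝ≥0∞) (π : S → ℝ≥0∞)
    -- the time-reversed transition matrix `p*`
    (pstar : S → S → ℝ≥0∞)
    (hpstar : ∀ x y, pstar x y * π x = π y * p y x)
    -- `μstar x` is the law of the reversed chain started at `x`,
    -- `μ x` is the law of the chain itself started at `x`
    (μstar μ : S → Measure (ℕ → S))
    (hμstar : IsMarkovChainLaw pstar μstar)
    (hμ : IsMarkovChainLaw p μ)
    (ν : S → S → ℝ≥0∞)
    (hν : ∀ x y, ν x y = π x * ∫⁻ ω, sumToHit p y ω ∂(μstar x)) :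
    ∀ y : S, (∑' x, ν x y) = ∑' x, π x * p x y * ∫⁻ ω, hitTime y ω ∂(μ x) := by
  intro y
  have hmeas : ∀ (f : S → ℝ≥0∞) (n : ℕ), Measurable fun ω => returnTerm y f (initSeg n ω) :=
    fun f n => (measurable_of_countable (returnTerm y f)).comp (measurable_initSeg n)
  calc ∑' x, ν x y
      = ∑' x, π x * ∫⁻ ω, ∑' n, returnTerm y (p · y) (initSeg n ω) ∂μstar x := by
        simp_rw [hν, sumToHit_eq_tsum_returnTerm]
    _ = ∑' n, ∑' x, π x * p x y * ∫⁻ ω, returnTerm y 1 (initSeg n ω) ∂μ x := by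
        rw [tsum_mul_lintegral_tsum _ _ (hmeas _)]
        exact tsum_congr (tsum_mul_lintegral_returnTerm_of_reversal hpstar hμstar hμ y _)
    _ = ∑' x, π x * p x y * ∫⁻ ω, hitTime y ω ∂μ x := by
        simp_rw [hitTime_eq_tsum_returnTerm]
        exact (tsum_mul_lintegral_tsum _ _ (hmeas 1)).symm

/-- The second marginal of `ν` satisfies `ν₂(y) = E_π(p(C_0, y) H_y)`. -/
theorem nu_second_marginal
    {S : Type*} [MeasurableSpace S] [MeasurableSingletonClass S] [Countable S]
    (p : S → S → ℝ≥0∞) (π : S → ℝ≥0∞)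
    (hstoch : ∀ x, ∑' y, p x y = 1)
    (hnoloop : ∀ x, p x x = 0)
    -- irreducibility
    (hirr : ∀ x y : S, ∃ n : ℕ, ∃ c : ℕ → S, c 0 = x ∧ c n = y ∧
      ∀ i < n, p (c i) (c (i + 1)) ≠ 0)
    -- `π` is an invariant probability distribution, everywhere positive
    (hπpos : ∀ x, 0 < π x) (hπprob : ∑' x, π x = 1)
    (hinv : ∀ y, ∑' x, π x * p x y = π y)
    -- the time-reversed transition matrix `p*`
    (pstar : S → S → ℝ≥0∞)
    (hpstar : ∀ x y, pstar x y * π x = π y * p y x)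
    -- `μstar x` is the law of the reversed chain started at `x`,
    -- `μ x` is the law of the chain itself started at `x`
    (μstar μ : S → Measure (ℕ → S))
    (hμstar : IsMarkovChainLaw pstar μstar)
    (hμ : IsMarkovChainLaw p μ)
    (ν : S → S → ℝ≥0∞)
    (hν : ∀ x y, ν x y = π x * ∫⁻ ω, sumToHit p y ω ∂(μstar x)) :
    ∀ y : S, (∑' x, ν x y) = ∑' x, π x * p x y * ∫⁻ ω, hitTime y ω ∂(μ x) :=
  nu_second_marginal_general p π pstar hpstar μstar μ hμstar hμ ν hν
end
end

section
/- Let $(T_{1,i})$ be i.i.d. copies of the hitting time of $0$ by the symmetric simple random walk started at $1$. Then for any $x,\varepsilon,K>0$, $\lim_{n\to\infty}\mathbb{P}\big(\inf_{0\le k\le\lfloor x\sqrt{n}\rfloor} \frac{1}{\sqrt{n}}\sum_{i=k}^{k+\lfloor\varepsilon\sqrt{n}\rfloor}(1+T_{1,i})\le K\big)=0$. -/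
/-!
A block of `⌊ε√n⌋ + 1` consecutive terms can have sum at most `K√n` only if each of its `T_i` is
at most `t = ⌊K√n⌋`. Every Dyck word of semilength `m` is a path from `1` first hitting `0` at
time `2m + 1`, so `P(T = 2m + 1) ≥ Cat(m) 2^{-(2m+1)} ≳ m^{-3/2}` and `P(T > t) ≥ 1 / (16√t)`.
By independence a fixed block is small with probability at most
`(1 - 1 / (16√t))^{ε√n} ≤ exp(-c n^{1/4})`, and a union bound over the `⌊x√n⌋ + 1` starting
points leaves `(x√n + 1) exp(-c n^{1/4}) → 0`.
-/

open MeasureTheory Filter Set Classical ProbabilityTheory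
open scoped ENNReal BigOperators Topology
noncomputable section
attribute [local instance] Classical.propDecidable

/-- Transition matrix of the symmetric simple random walk on `ℤ`. -/
def srwP : ℤ → ℤ → ℝ≥0∞ := fun x y =>
  if y = x + 1 ∨ y = x - 1 then 1 / 2 else 0

/-- Hitting time of `0`: `inf{n > 0 : ω n = 0}`. -/
def hit0 (ω : ℕ → ℤ) : ℕ := sInf {n | 0 < n ∧ ω n = 0}

lemma hit0_eq_iff {ω : ℕ → ℤ} {s : ℕ} (hs : 0 < s) :
    hit0 ω = s ↔ ω s = 0 ∧ ∀ n, 0 < n → n < s → ω n ≠ 0 := by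
  constructor
  · rintro rfl
    have hmem : hit0 ω ∈ {n | 0 < n ∧ ω n = 0} := Nat.sInf_mem (Nat.nonempty_of_pos_sInf hs)
    refine ⟨hmem.2, fun n hn hlt h0 => ?_⟩
    exact (Nat.sInf_le (show n ∈ {n | 0 < n ∧ ω n = 0} from ⟨hn, h0⟩)).not_gt hlt
  · rintro ⟨h0, hlt⟩
    exact le_antisymm (Nat.sInf_le ⟨hs, h0⟩)
      (le_csInf ⟨s, hs, h0⟩ fun n hn => not_lt.1 fun hns => hlt n hn.1 hns hn.2)

lemma measurable_hit0 : Measurable hit0 := by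
  refine measurable_to_countable' fun s => ?_
  rcases Nat.eq_zero_or_pos s with rfl | hs
  · have : hit0 ⁻¹' {0} = {ω | ∀ n, 0 < n → ω n ≠ 0} := by
      ext ω
      simp [hit0, Nat.sInf_eq_zero, Set.eq_empty_iff_forall_notMem]
    rw [this]
    measurability
  · have : hit0 ⁻¹' {s} = {ω | ω s = 0 ∧ ∀ n, 0 < n → n < s → ω n ≠ 0} := by
      ext ω
      exact hit0_eq_iff hs
    rw [this]
    measurability

open DyckStep

/-- The walk from `1` that follows the steps of `l` and then jumps to `0`. A Dyck word of length
`2 * m` gives in this way a path of the simple random walk with first hitting time `2 * m + 1`. -/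
def dyckWalk (l : List DyckStep) (i : ℕ) : ℤ :=
  if i ≤ l.length then 1 + ((l.take i).count U : ℤ) - (l.take i).count D else 0

@[simp]
lemma dyckWalk_zero (l : List DyckStep) : dyckWalk l 0 = 1 := by simp [dyckWalk]

lemma dyckWalk_succ (l : List DyckStep) {i : ℕ} (h : i < l.length) :
    dyckWalk l (i + 1) = dyckWalk l i + if l[i] = U then 1 else -1 := by
  rw [dyckWalk, dyckWalk, if_pos (show i + 1 ≤ l.length from h), if_pos h.le, List.take_add_one,
    List.getElem?_eq_getElem h]
  cases l[i] <;> simp <;> ring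

lemma dyckWalk_length_add_one (l : List DyckStep) : dyckWalk l (l.length + 1) = 0 := by
  simp [dyckWalk]

lemma one_le_dyckWalk (p : DyckWord) {i : ℕ} (h : i ≤ p.toList.length) :
    1 ≤ dyckWalk p.toList i := by
  have := p.count_D_le_count_U i
  rw [dyckWalk, if_pos h]
  omega

lemma dyckWalk_length (p : DyckWord) : dyckWalk p.toList p.toList.length = 1 := by
  rw [dyckWalk, if_pos le_rfl, List.take_length, p.count_U_eq_count_D]
  ring

lemma srwP_dyckWalk (p : DyckWord) {i : ℕ} (h : i ≤ p.toList.length) :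
    srwP (dyckWalk p.toList i) (dyckWalk p.toList (i + 1)) = 1 / 2 := by
  rcases h.lt_or_eq with h | rfl
  · rw [dyckWalk_succ _ h, srwP, if_pos]
    split_ifs
    exacts [Or.inl rfl, Or.inr (sub_eq_add_neg _ _).symm]
  · rw [dyckWalk_length, dyckWalk_length_add_one, srwP, if_pos]
    simp

lemma DyckWord.eq_of_dyckWalk_eq {p q : DyckWord} (hlen : p.toList.length = q.toList.length)
    (h : ∀ i ≤ p.toList.length, dyckWalk p.toList i = dyckWalk q.toList i) : p = q := by
  refine DyckWord.ext (List.ext_getElem hlen fun i hp hq => ?_)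
  have := h (i + 1) hp
  rw [dyckWalk_succ _ hp, dyckWalk_succ _ hq, h i hp.le] at this
  cases hpi : p.toList[i] <;> cases hqi : q.toList[i] <;> simp_all

lemma catalan_mul_le_measure_hit0_eq {μ : ℤ → Measure (ℕ → ℤ)} (hμ : IsMarkovChainLaw srwP μ)
    (m : ℕ) : (catalan m : ℝ≥0∞) * (1 / 2) ^ (2 * m + 1) ≤ μ 1 {ω | hit0 ω = 2 * m + 1} := by
  let C : {p : DyckWord // p.semilength = m} → Set (ℕ → ℤ) := fun p =>
    {ω | ∀ i ≤ 2 * m + 1, ω i = dyckWalk p.1.toList i}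
  have hlen (p : {p : DyckWord // p.semilength = m}) : p.1.toList.length = 2 * m := by
    rw [← p.1.two_mul_semilength_eq_length, p.2]
  have hC (p) : μ 1 (C p) = (1 / 2) ^ (2 * m + 1) := by
    rw [hμ, if_pos (dyckWalk_zero _), Finset.prod_congr rfl fun i hi =>
      srwP_dyckWalk p.1 (by rw [hlen]; exact Nat.lt_succ_iff.1 (Finset.mem_range.1 hi)),
      Finset.prod_const, Finset.card_range]
  have hC_sub (p) : C p ⊆ {ω | hit0 ω = 2 * m + 1} := by
    intro ω hω
    refine (hit0_eq_iff (Nat.succ_pos _)).2 ⟨?_, fun n _ hn => ?_⟩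
    · rw [hω _ le_rfl, ← hlen p, dyckWalk_length_add_one]
    rw [hω n hn.le]
    have := one_le_dyckWalk p.1 (i := n) (by have := hlen p; omega)
    omega
  have hC_disj : Pairwise (Function.onFun Disjoint C) := by
    refine fun p q hpq => Set.disjoint_left.2 fun ω hp hq => hpq (Subtype.ext ?_)
    refine DyckWord.eq_of_dyckWalk_eq (by rw [hlen, hlen]) fun i hi => ?_
    rw [hlen] at hi
    rw [← hp i (by omega), ← hq i (by omega)]
  calc (catalan m : ℝ≥0∞) * (1 / 2) ^ (2 * m + 1) = ∑' p, μ 1 (C p) := by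
        simp only [hC, tsum_fintype, Finset.sum_const, Finset.card_univ,
          DyckWord.card_dyckWord_semilength_eq_catalan, nsmul_eq_mul]
    _ = μ 1 (⋃ p, C p) := (measure_iUnion hC_disj fun p => by measurability).symm
    _ ≤ μ 1 {ω | hit0 ω = 2 * m + 1} := measure_mono (Set.iUnion_subset hC_sub)

lemma four_pow_sq_le_mul_centralBinom_sq {m : ℕ} (hm : 1 ≤ m) :
    (4 ^ m) ^ 2 ≤ 4 * m * m.centralBinom ^ 2 := by
  induction m, hm using Nat.le_induction with
  | base => decide
  | succ m hm ih =>
    have hrec := Nat.succ_mul_centralBinom_succ m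
    refine Nat.le_of_mul_le_mul_left ?_ (Nat.succ_pos m)
    calc (m + 1) * (4 ^ (m + 1)) ^ 2 = 16 * (m + 1) * (4 ^ m) ^ 2 := by ring
      _ ≤ 16 * (m + 1) * (4 * m * m.centralBinom ^ 2) := by gcongr
      _ ≤ 4 * (2 * (2 * m + 1) * m.centralBinom) ^ 2 := by
        have : 4 * m * (m + 1) ≤ (2 * m + 1) ^ 2 := by nlinarith
        nlinarith
      _ = (m + 1) * (4 * (m + 1) * (m + 1).centralBinom ^ 2) := by rw [← hrec]; ring

lemma four_pow_le_two_mul_sqrt_mul_centralBinom {m : ℕ} (hm : 1 ≤ m) :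
    (4 : ℝ) ^ m ≤ 2 * √m * m.centralBinom := by
  rw [← pow_le_pow_iff_left₀ (by positivity) (by positivity) two_ne_zero, mul_pow, mul_pow,
    Real.sq_sqrt (Nat.cast_nonneg m)]
  exact_mod_cast (four_pow_sq_le_mul_centralBinom_sq hm).trans_eq (by ring)

lemma one_div_le_catalan_mul_half_pow {m : ℕ} (hm : 1 ≤ m) :
    1 / (4 * (m + 1) * √m) ≤ (catalan m : ℝ) * (1 / 2) ^ (2 * m + 1) := by
  have hcat : ((m : ℝ) + 1) * catalan m = m.centralBinom := by
    exact_mod_cast succ_mul_catalan_eq_centralBinom m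
  have h4 := four_pow_le_two_mul_sqrt_mul_centralBinom hm
  rw [← hcat] at h4
  have hhalf : ((1 : ℝ) / 2) ^ (2 * m + 1) = 1 / (2 * 4 ^ m) := by
    rw [pow_succ, pow_mul, div_pow, div_pow]
    norm_num
  rw [hhalf, mul_one_div, div_le_div_iff₀ (by positivity) (by positivity)]
  nlinarith

lemma one_div_le_catalan_mul_half_pow_of_mem_Ico {t m : ℕ} (ht : 1 ≤ t)
    (hm : m ∈ Finset.Ico t (2 * t)) :
    1 / (16 * t * √t) ≤ (catalan m : ℝ) * (1 / 2) ^ (2 * m + 1) := by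
  obtain ⟨htm, hmt⟩ := Finset.mem_Ico.1 hm
  have hm1 : ((m : ℝ) + 1) ≤ 2 * t := by exact_mod_cast hmt
  have hsqrt_m : √(m : ℝ) ≤ 2 * √t := by
    rw [show (2 : ℝ) * √t = √(4 * t) by rw [Real.sqrt_mul' _ (by positivity)]; norm_num]
    exact Real.sqrt_le_sqrt (by exact_mod_cast (by omega : m ≤ 4 * t))
  have hm_pos : (1 : ℝ) ≤ m := by exact_mod_cast ht.trans htm
  refine le_trans (one_div_le_one_div_of_le (by positivity) ?_)
    (one_div_le_catalan_mul_half_pow (ht.trans htm))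
  calc 4 * ((m : ℝ) + 1) * √m ≤ 4 * (2 * t) * (2 * √t) := by gcongr
    _ = 16 * t * √t := by ring

lemma ofReal_le_measure_lt_hit0 {μ : ℤ → Measure (ℕ → ℤ)} (hμ : IsMarkovChainLaw srwP μ)
    {t : ℕ} (ht : 1 ≤ t) : ENNReal.ofReal (1 / (16 * √t)) ≤ μ 1 {ω | t < hit0 ω} := by
  have hterm : ∀ m ∈ Finset.Ico t (2 * t),
      ENNReal.ofReal (1 / (16 * t * √t)) ≤ μ 1 {ω | hit0 ω = 2 * m + 1} := fun m hm => calc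
    ENNReal.ofReal (1 / (16 * t * √t))
        ≤ ENNReal.ofReal (catalan m * (1 / 2) ^ (2 * m + 1)) :=
      ENNReal.ofReal_le_ofReal (one_div_le_catalan_mul_half_pow_of_mem_Ico ht hm)
    _ = (catalan m : ℝ≥0∞) * (1 / 2) ^ (2 * m + 1) := by
      rw [ENNReal.ofReal_mul (by positivity), ENNReal.ofReal_pow (by norm_num),
        ENNReal.ofReal_natCast, ENNReal.ofReal_div_of_pos two_pos]
      norm_num
    _ ≤ μ 1 {ω | hit0 ω = 2 * m + 1} := catalan_mul_le_measure_hit0_eq hμ m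
  have hdisj : (Finset.Ico t (2 * t) : Set ℕ).PairwiseDisjoint
      fun m => {ω : ℕ → ℤ | hit0 ω = 2 * m + 1} := fun a _ b _ hab =>
    Set.disjoint_left.2 fun ω ha hb => hab (by simp only [Set.mem_ofPred] at ha hb; omega)
  calc ENNReal.ofReal (1 / (16 * √t)) = t • ENNReal.ofReal (1 / (16 * t * √t)) := by
        rw [nsmul_eq_mul, ← ENNReal.ofReal_natCast, ← ENNReal.ofReal_mul (by positivity)]
        congr 1
        field_simp
    _ = (Finset.Ico t (2 * t)).card • ENNReal.ofReal (1 / (16 * t * √t)) := by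
        rw [Nat.card_Ico, two_mul, Nat.add_sub_cancel]
    _ ≤ ∑ m ∈ Finset.Ico t (2 * t), μ 1 {ω | hit0 ω = 2 * m + 1} :=
        Finset.card_nsmul_le_sum _ _ _ hterm
    _ = μ 1 (⋃ m ∈ Finset.Ico t (2 * t), {ω | hit0 ω = 2 * m + 1}) :=
        (measure_biUnion_finset hdisj fun m _ => measurable_hit0 (measurableSet_singleton _)).symm
    _ ≤ μ 1 {ω | t < hit0 ω} := by
        refine measure_mono (Set.iUnion₂_subset fun m hm ω hω => ?_)
        simp only [Set.mem_ofPred] at hω ⊢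
        have := (Finset.mem_Ico.1 hm).1
        omega

lemma measure_exists_block_mem_le {Ω β : Type*} [MeasurableSpace Ω] [MeasurableSpace β]
    {P : Measure Ω} {X : ℕ → Ω → β} (hX : iIndepFun X P) {s : Set β} (hs : MeasurableSet s)
    {p : ℝ≥0∞} (hp : ∀ i, P (X i ⁻¹' s) ≤ p) (N m : ℕ) :
    P {ω | ∃ k ≤ N, ∀ i ∈ Finset.Icc k (k + m), X i ω ∈ s} ≤ (N + 1) * p ^ (m + 1) := by
  have hblocks : {ω | ∃ k ≤ N, ∀ i ∈ Finset.Icc k (k + m), X i ω ∈ s}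
      = ⋃ k ∈ Finset.range (N + 1), ⋂ i ∈ Finset.Icc k (k + m), X i ⁻¹' s := by
    ext ω
    simp
  have hblock (k : ℕ) : P (⋂ i ∈ Finset.Icc k (k + m), X i ⁻¹' s) ≤ p ^ (m + 1) := by
    rw [hX.meas_biInter fun i _ => ⟨s, hs, rfl⟩]
    calc ∏ i ∈ Finset.Icc k (k + m), P (X i ⁻¹' s) ≤ ∏ _i ∈ Finset.Icc k (k + m), p :=
          Finset.prod_le_prod' fun i _ => hp i
      _ = p ^ (m + 1) := by rw [Finset.prod_const, Nat.card_Icc, add_assoc, Nat.add_sub_cancel_left]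
  calc P {ω | ∃ k ≤ N, ∀ i ∈ Finset.Icc k (k + m), X i ω ∈ s}
      ≤ ∑ k ∈ Finset.range (N + 1), P (⋂ i ∈ Finset.Icc k (k + m), X i ⁻¹' s) :=
        hblocks ▸ measure_biUnion_finset_le _ _
    _ ≤ ∑ _k ∈ Finset.range (N + 1), p ^ (m + 1) := Finset.sum_le_sum fun k _ => hblock k
    _ = (N + 1) * p ^ (m + 1) := by simp

lemma one_div_sixteen_mul_sqrt_le_one {t : ℕ} (ht : 1 ≤ t) : 1 / (16 * √(t : ℝ)) ≤ 1 := by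
  have : (1 : ℝ) ≤ √t := Real.one_le_sqrt.2 (by exact_mod_cast ht)
  rw [div_le_one (by positivity)]
  linarith

lemma eventually_one_le_floor_mul_sqrt {K : ℝ} (hK : 0 < K) :
    ∀ᶠ n : ℕ in atTop, 1 ≤ ⌊K * √n⌋₊ :=
  ((Real.tendsto_sqrt_atTop.comp tendsto_natCast_atTop_atTop).const_mul_atTop hK
    |>.eventually_ge_atTop 1).mono fun _ hn => Nat.le_floor (by simpa using hn)

lemma tendsto_mul_sq_add_one_mul_exp_neg (x : ℝ) {c : ℝ} (hc : 0 < c) :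
    Tendsto (fun y : ℝ => (x * y ^ 2 + 1) * Real.exp (-(c * y))) atTop (𝓝 0) := by
  have hcy : Tendsto (fun y : ℝ => c * y) atTop atTop := tendsto_id.const_mul_atTop hc
  have hsq := ((Real.tendsto_pow_mul_exp_neg_atTop_nhds_zero 2).comp hcy).const_mul (x / c ^ 2)
  have hexp := Real.tendsto_exp_neg_atTop_nhds_zero.comp hcy
  simpa [mul_zero, zero_add] using (hsq.add hexp).congr fun y => by
    simp only [Function.comp_apply]
    field_simp

lemma floor_add_one_mul_one_sub_pow_le {x ε K s : ℝ} (hx : 0 ≤ x) (hK : 0 ≤ K) (hs : 0 ≤ s)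
    (ht : 1 ≤ ⌊K * s⌋₊) :
    ((⌊x * s⌋₊ : ℝ) + 1) * (1 - 1 / (16 * √(⌊K * s⌋₊ : ℝ))) ^ (⌊ε * s⌋₊ + 1)
      ≤ (x * √s ^ 2 + 1) * Real.exp (-(ε / (16 * √K) * √s)) := by
  set t := ⌊K * s⌋₊
  set M := ⌊ε * s⌋₊
  set δ := 1 / (16 * √(t : ℝ))
  have hδ1 : δ ≤ 1 := one_div_sixteen_mul_sqrt_le_one ht
  have hexponent : ε / (16 * √K) * √s ≤ δ * (M + 1) := calc
    ε / (16 * √K) * √s = ε * (√s * √s) / (16 * (√K * √s)) := by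
      field_simp
    _ = ε * s / (16 * (√K * √s)) := by rw [Real.mul_self_sqrt hs]
    _ ≤ (M + 1) / (16 * √t) := by
      gcongr
      · exact (Nat.lt_floor_add_one _).le
      · rw [← Real.sqrt_mul hK]
        exact Real.sqrt_le_sqrt (Nat.floor_le (by positivity))
    _ = δ * (M + 1) := by ring
  calc ((⌊x * s⌋₊ : ℝ) + 1) * (1 - δ) ^ (M + 1)
      ≤ (x * s + 1) * Real.exp (-δ) ^ (M + 1) := by
        refine mul_le_mul (by gcongr; exact Nat.floor_le (by positivity))
          (pow_le_pow_left₀ (by linarith) (Real.one_sub_le_exp_neg δ) _)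
          (pow_nonneg (by linarith) _) (by positivity)
    _ = (x * √s ^ 2 + 1) * Real.exp (-(δ * (M + 1))) := by
        rw [Real.sq_sqrt hs, ← Real.exp_nat_mul]
        congr 2
        push_cast
        ring
    _ ≤ (x * √s ^ 2 + 1) * Real.exp (-(ε / (16 * √K) * √s)) := by
        gcongr

lemma tendsto_floor_add_one_mul_one_sub_pow {x ε K : ℝ} (hx : 0 ≤ x) (hε : 0 < ε) (hK : 0 < K) :
    Tendsto (fun n : ℕ => ((⌊x * √n⌋₊ : ℝ) + 1) *
      (1 - 1 / (16 * √(⌊K * √n⌋₊ : ℝ))) ^ (⌊ε * √n⌋₊ + 1)) atTop (𝓝 0) := by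
  have hlim := (tendsto_mul_sq_add_one_mul_exp_neg x (c := ε / (16 * √K)) (by positivity)).comp
    (Real.tendsto_sqrt_atTop.comp (Real.tendsto_sqrt_atTop.comp tendsto_natCast_atTop_atTop))
  refine squeeze_zero' ?_ ?_ hlim
  · filter_upwards [eventually_one_le_floor_mul_sqrt hK] with n ht
    have := one_div_sixteen_mul_sqrt_le_one ht
    exact mul_nonneg (by positivity) (pow_nonneg (by linarith) _)
  · filter_upwards [eventually_one_le_floor_mul_sqrt hK] with n ht
    exact floor_add_one_mul_one_sub_pow_le hx hK.le (Real.sqrt_nonneg _) ht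

lemma measure_preimage_Iic_le_of_map_eq_map_hit0 {μ : ℤ → Measure (ℕ → ℤ)}
    (hμ : IsMarkovChainLaw srwP μ) {Ω : Type*} [MeasurableSpace Ω] {P : Measure Ω}
    [IsProbabilityMeasure P] {τ : Ω → ℕ} (hτ : Measurable τ) (hlaw : P.map τ = (μ 1).map hit0)
    {t : ℕ} (ht : 1 ≤ t) : P (τ ⁻¹' Set.Iic t) ≤ 1 - ENNReal.ofReal (1 / (16 * √t)) := by
  rw [← Set.compl_Ioi, Set.preimage_compl, prob_compl_eq_one_sub (hτ measurableSet_Ioi),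
    ← Measure.map_apply hτ measurableSet_Ioi, hlaw,
    Measure.map_apply measurable_hit0 measurableSet_Ioi]
  exact tsub_le_tsub_left (ofReal_le_measure_lt_hit0 hμ ht) 1

theorem srw_min_of_block_sums_tendsto_zero_general
    -- the simple random walk laws
    (μ : ℤ → Measure (ℕ → ℤ)) (hμ : IsMarkovChainLaw srwP μ)
    -- an i.i.d. sequence of copies of the hitting time
    {Ω : Type*} [MeasurableSpace Ω] (P : Measure Ω) [IsProbabilityMeasure P]
    (T : ℕ → Ω → ℕ) (hTmeas : ∀ i, Measurable (T i))
    (hTindep : iIndepFun T P)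
    (hTdist : ∀ i, Measure.map (T i) P = Measure.map hit0 (μ 1))
    (x ε K : ℝ) (hx : 0 < x) (hε : 0 < ε) (hK : 0 < K) :
    Tendsto (fun n : ℕ => P {ω | ∃ k ≤ Nat.floor (x * Real.sqrt n),
        ((∑ i ∈ Finset.Icc k (k + Nat.floor (ε * Real.sqrt n)),
          (1 + T i ω) : ℕ) : ℝ) ≤ K * Real.sqrt n})
      atTop (nhds 0) := by
  have hblock (n : ℕ) : {ω | ∃ k ≤ ⌊x * √n⌋₊,
      ((∑ i ∈ Finset.Icc k (k + ⌊ε * √n⌋₊), (1 + T i ω) : ℕ) : ℝ) ≤ K * √n} ⊆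
      {ω | ∃ k ≤ ⌊x * √n⌋₊, ∀ i ∈ Finset.Icc k (k + ⌊ε * √n⌋₊), T i ω ∈ Set.Iic ⌊K * √n⌋₊} := by
    rintro ω ⟨k, hk, hsum⟩
    refine ⟨k, hk, fun i hi => Nat.le_floor (le_trans ?_ hsum)⟩
    exact_mod_cast (Nat.le_add_left _ 1).trans
      (Finset.single_le_sum (f := fun j => 1 + T j ω) (fun j _ => Nat.zero_le _) hi)
  refine tendsto_of_tendsto_of_tendsto_of_le_of_le' tendsto_const_nhds
    (ENNReal.ofReal_zero ▸
      ENNReal.tendsto_ofReal (tendsto_floor_add_one_mul_one_sub_pow hx.le hε hK))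
    (Eventually.of_forall fun _ => zero_le) ?_
  filter_upwards [eventually_one_le_floor_mul_sqrt hK] with n ht
  have hδ := one_div_sixteen_mul_sqrt_le_one ht
  calc _ ≤ _ := measure_mono (hblock n)
    _ ≤ _ := measure_exists_block_mem_le hTindep measurableSet_Iic
      (fun i => measure_preimage_Iic_le_of_map_eq_map_hit0 hμ (hTmeas i) (hTdist i) ht) _ _
    _ = _ := by
      rw [ENNReal.ofReal_mul (by positivity), ENNReal.ofReal_pow (by linarith),
        ENNReal.ofReal_sub _ (by positivity), ENNReal.ofReal_one]
      norm_cast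

/-- If `(T_{1,i})` are i.i.d. copies of the hitting time of `0` by the symmetric simple
random walk started at `1`, then for any `x, ε, K > 0`,
`ℙ(inf_{0 ≤ k ≤ ⌊x√n⌋} n^{-1/2} ∑_{i=k}^{k+⌊ε√n⌋} (1 + T_{1,i}) ≤ K) → 0`. -/
theorem srw_min_of_block_sums_tendsto_zero
    -- the simple random walk laws
    (μ : ℤ → Measure (ℕ → ℤ)) (hμ : IsMarkovChainLaw srwP μ)
    (hprob : ∀ z, IsProbabilityMeasure (μ z))
    -- an i.i.d. sequence of copies of the hitting time
    {Ω : Type*} [MeasurableSpace Ω] (P : Measure Ω) [IsProbabilityMeasure P]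
    (T : ℕ → Ω → ℕ) (hTmeas : ∀ i, Measurable (T i))
    (hTindep : iIndepFun T P)
    (hTdist : ∀ i, Measure.map (T i) P = Measure.map hit0 (μ 1))
    (x ε K : ℝ) (hx : 0 < x) (hε : 0 < ε) (hK : 0 < K) :
    Tendsto (fun n : ℕ => P {ω | ∃ k ≤ Nat.floor (x * Real.sqrt n),
        ((∑ i ∈ Finset.Icc k (k + Nat.floor (ε * Real.sqrt n)),
          (1 + T i ω) : ℕ) : ℝ) ≤ K * Real.sqrt n})
      atTop (nhds 0) :=
  srw_min_of_block_sums_tendsto_zero_general μ hμ P T hTmeas hTindep hTdist x ε K hx hε hK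
end
end
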